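/- In a maximally delayed gflow (g,≺) of a labelled open graph, every vertex u in the second layer V_1^≺ has correction set contained in O ∪ {u}, i.e. g(u) ⊆ O ∪ {u}. -/

import Mathlib

open Set

/-- The three measurement planes. -/
inductive MPlane | XY | XZ | YZ
deriving DecidableEq

/-- The odd neighbourhood of a set `K`: vertices with an odd number of neighbours in `K`. -/
def oddNbhd {V : Type*} (G : SimpleGraph V) (K : Set V) : Set V :=
  {u | Odd (K ∩ G.neighborSet u).ncard}

/-- `(g, prec)` is a gflow for the labelled open graph `(G, I, O, lam)`. -/
structure GFlow {V : Type*} (G : SimpleGraph V) (I O : Set V) (lam : V → MPlane)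
    (g : V → Set V) (prec : V → V → Prop) : Prop where
  irrefl : ∀ v, ¬ prec v v
  trans : ∀ u v w, prec u v → prec v w → prec u w
  noInput : ∀ v, v ∉ O → g v ∩ I = ∅
  g1 : ∀ v, v ∉ O → ∀ w ∈ g v, w ≠ v → prec v w
  g2 : ∀ v, v ∉ O → ∀ w ∈ oddNbhd G (g v), w ≠ v → prec v w
  gXY : ∀ v, v ∉ O → lam v = MPlane.XY → v ∉ g v ∧ v ∈ oddNbhd G (g v)
  gXZ : ∀ v, v ∉ O → lam v = MPlane.XZ → v ∈ g v ∧ v ∈ oddNbhd G (g v)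
  gYZ : ∀ v, v ∉ O → lam v = MPlane.YZ → v ∈ g v ∧ v ∉ oddNbhd G (g v)

/-- The `prec`-maximal elements of a set `X`. -/
def maxElems {V : Type*} (prec : V → V → Prop) (X : Set V) : Set V :=
  {u ∈ X | ∀ v ∈ X, ¬ prec u v}

/-- The union `V_0^≺ ∪ ⋯ ∪ V_{k-1}^≺` of the first `k` layers of `prec`. -/
def layersBelow {V : Type*} (prec : V → V → Prop) : ℕ → Set V
  | 0 => ∅
  | k + 1 => layersBelow prec k ∪ maxElems prec (layersBelow prec k)ᶜ

/-- The layer `V_k^≺ = max_≺ (V ∖ ∪_{i<k} V_i^≺)`. -/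
def layer {V : Type*} (prec : V → V → Prop) (k : ℕ) : Set V :=
  maxElems prec (layersBelow prec k)ᶜ

/-- `(·,p)` is more delayed than `(·,q)`: the cumulative layer sizes of `p`
dominate those of `q`, strictly somewhere. -/
def MoreDelayed {V : Type*} (p q : V → V → Prop) : Prop :=
  (∀ k, (layersBelow q k).ncard ≤ (layersBelow p k).ncard) ∧
  (∃ k, (layersBelow q k).ncard < (layersBelow p k).ncard)

/-- `(g, prec)` is a maximally delayed gflow of `(G, I, O, lam)`. -/
def MaximallyDelayed {V : Type*} (G : SimpleGraph V) (I O : Set V) (lam : V → MPlane)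
    (g : V → Set V) (prec : V → V → Prop) : Prop :=
  GFlow G I O lam g prec ∧
  ∀ g' prec', GFlow G I O lam g' prec' → ¬ MoreDelayed prec' prec

/-!
A vertex with no `≺`-successor can only be corrected by `g v ⊆ {v}` with `Odd(g v) ⊆ {v}`;
checking the three planes, this is impossible outside `O` unless `v` is isolated, and an
isolated vertex reaches `I ∪ O` only if it lies there, where `g v ∩ I = ∅` excludes `I`. So the
top layer `V_0` of any gflow lies in `O`. Conversely, in the order induced by `g` alone outputs
have no successors, so it is a gflow whose top layer contains `O`; maximal delay forces
`O ⊆ V_0`. Hence `V_0 = O`, `u ∈ V_1` is a non-output vertex whose successors all lie in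
`O`, and `g u ∖ {u}` consists of successors of `u` by (g1).
-/

theorem oddNbhd_empty {V : Type*} (G : SimpleGraph V) : oddNbhd G ∅ = ∅ := by
  ext u
  simp [oddNbhd]

theorem oddNbhd_singleton {V : Type*} (G : SimpleGraph V) (v : V) :
    oddNbhd G {v} = G.neighborSet v := by
  ext u
  by_cases hvu : G.Adj v u
  · simp [oddNbhd, singleton_inter_of_mem (show v ∈ G.neighborSet u from hvu.symm), hvu]
  · have hv : v ∉ G.neighborSet u := fun h => hvu h.symm
    simp [oddNbhd, singleton_inter_of_notMem hv, hvu]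

theorem layersBelow_one {V : Type*} (prec : V → V → Prop) :
    layersBelow prec 1 = layer prec 0 :=
  empty_union _

theorem layersBelow_mono {V : Type*} {p q : V → V → Prop} (hqp : ∀ a b, q a b → p a b) :
    ∀ k, layersBelow p k ⊆ layersBelow q k
  | 0 => Subset.rfl
  | k + 1 => by
    intro x hx
    by_cases hxq : x ∈ layersBelow q k
    · exact Or.inl hxq
    rcases hx with hxp | ⟨-, hxmax⟩
    · exact absurd (layersBelow_mono hqp k hxp) hxq
    · exact Or.inr ⟨hxq, fun w hw hxw =>
        hxmax w (fun hwp => hw (layersBelow_mono hqp k hwp)) (hqp x w hxw)⟩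

theorem moreDelayed_of_le_of_ssubset {V : Type*} [Finite V] {p q : V → V → Prop}
    (hqp : ∀ a b, q a b → p a b) {k : ℕ} (hk : layersBelow p k ⊂ layersBelow q k) :
    MoreDelayed q p :=
  ⟨fun j => ncard_le_ncard (layersBelow_mono hqp j), ⟨k, ncard_lt_ncard hk⟩⟩

/-- The least transitive relation for which `g` satisfies (g1) and (g2). -/
def inducedOrder {V : Type*} (G : SimpleGraph V) (O : Set V) (g : V → Set V) : V → V → Prop :=
  Relation.TransGen fun a b => a ∉ O ∧ b ≠ a ∧ (b ∈ g a ∨ b ∈ oddNbhd G (g a))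

theorem not_inducedOrder_of_mem {V : Type*} {G : SimpleGraph V} {O : Set V} {g : V → Set V}
    {o : V} (ho : o ∈ O) (w : V) : ¬ inducedOrder G O g o w := by
  intro hw
  obtain ⟨_, ⟨hoO, -⟩, -⟩ := Relation.TransGen.head'_iff.mp hw
  exact hoO ho

theorem mem_of_neighborSet_eq_empty {V : Type*} {G : SimpleGraph V} {S : Set V}
    (hcomp : ∀ v : V, ∃ w ∈ S, G.Reachable v w) {v : V} (hv : G.neighborSet v = ∅) : v ∈ S := by
  obtain ⟨w, hwS, hvw⟩ := hcomp v
  obtain rfl : v = w :=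
    by_contra fun hne => SimpleGraph.not_reachable_of_neighborSet_left_eq_empty hne hv hvw
  exact hwS

namespace GFlow

variable {V : Type*} {G : SimpleGraph V} {I O : Set V} {lam : V → MPlane}
  {g : V → Set V} {prec : V → V → Prop}

theorem inducedOrder_le (hf : GFlow G I O lam g prec) {a b : V}
    (hab : inducedOrder G O g a b) : prec a b := by
  have : IsTrans V prec := ⟨hf.trans⟩
  refine Relation.transGen_minimal ?_ a b hab
  rintro a b ⟨haO, hba, hb | hb⟩
  · exact hf.g1 a haO b hb hba
  · exact hf.g2 a haO b hb hba

theorem inducedOrder_gflow (hf : GFlow G I O lam g prec) :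
    GFlow G I O lam g (inducedOrder G O g) where
  irrefl v hv := hf.irrefl v (hf.inducedOrder_le hv)
  trans _ _ _ := Relation.TransGen.trans
  noInput := hf.noInput
  g1 _ hv _ hw hwv := .single ⟨hv, hwv, Or.inl hw⟩
  g2 _ hv _ hw hwv := .single ⟨hv, hwv, Or.inr hw⟩
  gXY := hf.gXY
  gXZ := hf.gXZ
  gYZ := hf.gYZ

theorem mem_output_of_forall_not_prec (hf : GFlow G I O lam g prec)
    (hcomp : ∀ v : V, ∃ w ∈ I ∪ O, G.Reachable v w) {v : V} (hv : ∀ w, ¬ prec v w) :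
    v ∈ O := by
  by_contra hvO
  have hg : g v ⊆ {v} := fun w hw => by_contra fun hwv => hv w (hf.g1 v hvO w hw hwv)
  have hodd : oddNbhd G (g v) ⊆ {v} := fun w hw =>
    by_contra fun hwv => hv w (hf.g2 v hvO w hw hwv)
  rcases subset_singleton_iff_eq.mp hg with hg0 | hg1
  · have hvg : v ∉ g v := by simp [hg0]
    have hvodd : v ∉ oddNbhd G (g v) := by simp [hg0, oddNbhd_empty]
    cases hlam : lam v
    · exact hvodd (hf.gXY v hvO hlam).2
    · exact hvodd (hf.gXZ v hvO hlam).2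
    · exact hvg (hf.gYZ v hvO hlam).1
  · rw [hg1, oddNbhd_singleton] at hodd
    cases hlam : lam v
    · exact (hf.gXY v hvO hlam).1 (hg1 ▸ mem_singleton v)
    · have hvodd := (hf.gXZ v hvO hlam).2
      rw [hg1, oddNbhd_singleton] at hvodd
      exact G.irrefl hvodd
    · have hN : G.neighborSet v = ∅ := (subset_singleton_iff_eq.mp hodd).resolve_right
        fun h => G.irrefl (h ▸ mem_singleton v : v ∈ G.neighborSet v)
      rcases mem_of_neighborSet_eq_empty hcomp hN with hvI | hvO'
      · exact eq_empty_iff_forall_notMem.mp (hf.noInput v hvO) v ⟨(hf.gYZ v hvO hlam).1, hvI⟩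
      · exact hvO hvO'

theorem layer_zero_subset (hf : GFlow G I O lam g prec)
    (hcomp : ∀ v : V, ∃ w ∈ I ∪ O, G.Reachable v w) : layer prec 0 ⊆ O :=
  fun _ hv => hf.mem_output_of_forall_not_prec hcomp fun w => hv.2 w (notMem_empty w)

end GFlow

namespace MaximallyDelayed

variable {V : Type*} [Finite V] {G : SimpleGraph V} {I O : Set V} {lam : V → MPlane}
  {g : V → Set V} {prec : V → V → Prop}

theorem output_subset_layer_zero (h : MaximallyDelayed G I O lam g prec) :
    O ⊆ layer prec 0 := by
  refine fun o ho => ⟨notMem_empty o, fun w _ how => ?_⟩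
  have hle : ∀ a b, inducedOrder G O g a b → prec a b := fun _ _ => h.1.inducedOrder_le
  refine h.2 g _ h.1.inducedOrder_gflow (moreDelayed_of_le_of_ssubset hle (k := 1)
    ((ssubset_iff_of_subset (layersBelow_mono hle 1)).mpr ?_))
  rw [layersBelow_one, layersBelow_one]
  exact ⟨o, ⟨notMem_empty o, fun w _ => not_inducedOrder_of_mem ho w⟩,
    fun hmax => hmax.2 w (notMem_empty w) how⟩

theorem layer_zero_eq (h : MaximallyDelayed G I O lam g prec)
    (hcomp : ∀ v : V, ∃ w ∈ I ∪ O, G.Reachable v w) : layer prec 0 = O :=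
  (h.1.layer_zero_subset hcomp).antisymm h.output_subset_layer_zero

end MaximallyDelayed

/-- In a maximally delayed gflow, every vertex `u` in the second layer `V_1^≺`
has correction set contained in `O ∪ {u}`. -/
theorem maximallyDelayed_layer_one_correction {V : Type*} [Fintype V]
    (G : SimpleGraph V) (I O : Set V) (lam : V → MPlane)
    (g : V → Set V) (prec : V → V → Prop)
    (h : MaximallyDelayed G I O lam g prec)
    (hcomp : ∀ v : V, ∃ w ∈ I ∪ O, G.Reachable v w)
    (u : V) (hu : u ∈ layer prec 1) :
    g u ⊆ O ∪ {u} := by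
  obtain ⟨huO, hmax⟩ := hu
  rw [layersBelow_one, h.layer_zero_eq hcomp] at huO hmax
  intro w hw
  by_cases hwu : w = u
  · exact Or.inr hwu
  · exact Or.inl (by_contra fun hwO => hmax w hwO (h.1.g1 u huO w hw hwu))
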